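/- Under the same hypotheses (T² = c(T + id_W) with T self-adjoint tangential part of the golden structure φ on W, N the normal part), for all X, Y ∈ W: ⟨NX, NY⟩ = (1 − c)(⟨X, Y⟩ + ⟨TX, Y⟩). -/

import Mathlib

open RealInnerProductSpace
open scoped InnerProductSpace

/-!
Write `P` for the orthogonal projection onto `W`, so that `T = P ∘ φ` and `N = φ - P ∘ φ`.
Since `N X ⊥ W ∋ T Y`, Pythagoras gives `⟪N X, N Y⟫ = ⟪φ X, φ Y⟫ - ⟪T X, T Y⟫`. The golden
relation and self-adjointness turn the first term into `⟪T X, Y⟫ + ⟪X, Y⟫`; the compression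
`T` is self-adjoint on `W`, so the second is `⟪T² X, Y⟫ = c (⟪T X, Y⟫ + ⟪X, Y⟫)`.
-/

namespace Submodule

variable {𝕜 E : Type*} [RCLike 𝕜] [NormedAddCommGroup E] [InnerProductSpace 𝕜 E]
  (K : Submodule 𝕜 E) [K.HasOrthogonalProjection]

theorem inner_starProjection_left_of_mem {v w : E} (hw : w ∈ K) :
    ⟪K.starProjection v, w⟫_𝕜 = ⟪v, w⟫_𝕜 := by
  rw [inner_starProjection_left_eq_right, starProjection_eq_self_iff.mpr hw]

theorem inner_starProjection_right_of_mem {v w : E} (hw : w ∈ K) :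
    ⟪w, K.starProjection v⟫_𝕜 = ⟪w, v⟫_𝕜 := by
  rw [← inner_starProjection_left_eq_right, starProjection_eq_self_iff.mpr hw]

theorem inner_sub_starProjection_sub_starProjection (u v : E) :
    ⟪u - K.starProjection u, v - K.starProjection v⟫_𝕜 =
      ⟪u, v⟫_𝕜 - ⟪K.starProjection u, K.starProjection v⟫_𝕜 := by
  rw [inner_sub_right, starProjection_inner_eq_zero u _ (K.starProjection_apply_mem v), sub_zero,
    inner_sub_left, inner_starProjection_right_of_mem K (K.starProjection_apply_mem u)]

end Submodule

namespace LinearMap.IsSymmetric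

variable {𝕜 E : Type*} [RCLike 𝕜] [NormedAddCommGroup E] [InnerProductSpace 𝕜 E]
  {φ : E →ₗ[𝕜] E}

theorem inner_starProjection_apply_of_mem (hφ : φ.IsSymmetric) (K : Submodule 𝕜 E)
    [K.HasOrthogonalProjection] {u w : E} (hu : u ∈ K) (hw : w ∈ K) :
    ⟪K.starProjection (φ u), w⟫_𝕜 = ⟪u, K.starProjection (φ w)⟫_𝕜 := by
  rw [K.inner_starProjection_left_of_mem hw, K.inner_starProjection_right_of_mem hu, hφ]

theorem inner_map_map_of_golden (hφ : φ.IsSymmetric) (hgolden : ∀ x, φ (φ x) = φ x + x)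
    (x y : E) : ⟪φ x, φ y⟫_𝕜 = ⟪φ x, y⟫_𝕜 + ⟪x, y⟫_𝕜 := by
  rw [hφ, hgolden, inner_add_right, hφ]

end LinearMap.IsSymmetric

theorem slant_normal_inner_identity_general
    {V : Type*} [NormedAddCommGroup V] [InnerProductSpace ℝ V] (φ : V →ₗ[ℝ] V)
    (hφ : ∀ X : V, φ (φ X) = φ X + X)
    (hsa : ∀ X Y : V, ⟪φ X, Y⟫ = ⟪X, φ Y⟫)
    (W : Submodule ℝ V) [CompleteSpace W]
    (T N : V → V) (hT : ∀ X : V, T X = (Submodule.orthogonalProjectionOnto W (φ X) : V))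
    (hN : ∀ X : V, N X = φ X - T X)
    (c : ℝ)
    (hT2 : ∀ X ∈ W, T (T X) = c • (T X + X)) :
    ∀ X ∈ W, ∀ Y ∈ W, ⟪N X, N Y⟫ = (1 - c) * (⟪X, Y⟫ + ⟪T X, Y⟫) := by
  obtain rfl : T = fun X => W.starProjection (φ X) := funext hT
  obtain rfl : N = fun X => φ X - W.starProjection (φ X) := funext hN
  beta_reduce at hT2
  intro X hX Y hY
  have hφ_sa : φ.IsSymmetric := hsa
  calc ⟪φ X - W.starProjection (φ X), φ Y - W.starProjection (φ Y)⟫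
      = ⟪φ X, φ Y⟫ - ⟪W.starProjection (φ X), W.starProjection (φ Y)⟫ :=
        W.inner_sub_starProjection_sub_starProjection _ _
    _ = (⟪φ X, Y⟫ + ⟪X, Y⟫) - ⟪W.starProjection (φ (W.starProjection (φ X))), Y⟫ := by
        rw [hφ_sa.inner_map_map_of_golden hφ,
          hφ_sa.inner_starProjection_apply_of_mem W (W.starProjection_apply_mem _) hY]
    _ = (1 - c) * (⟪X, Y⟫ + ⟪W.starProjection (φ X), Y⟫) := by
        rw [hT2 X hX, real_inner_smul_left, inner_add_left,
          W.inner_starProjection_left_of_mem hY]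
        ring

theorem slant_normal_inner_identity
    {V : Type*} [NormedAddCommGroup V] [InnerProductSpace ℝ V] (φ : V →ₗ[ℝ] V)
    (hφ : ∀ X : V, φ (φ X) = φ X + X)
    (hsa : ∀ X Y : V, ⟪φ X, Y⟫ = ⟪X, φ Y⟫)
    (W : Submodule ℝ V) [CompleteSpace W]
    (T N : V → V) (hT : ∀ X : V, T X = (Submodule.orthogonalProjectionOnto W (φ X) : V))
    (hN : ∀ X : V, N X = φ X - T X)
    (c : ℝ) (hc : c ∈ Set.Icc (0 : ℝ) 1)
    (hT2 : ∀ X ∈ W, T (T X) = c • (T X + X)) :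
    ∀ X ∈ W, ∀ Y ∈ W, ⟪N X, N Y⟫ = (1 - c) * (⟪X, Y⟫ + ⟪T X, Y⟫) :=
  slant_normal_inner_identity_general φ hφ hsa W T N hT hN c hT2
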